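/- For every k ≥ 1, the elements z₀^{3^{k−1}}, z₁^{3^{k−1}}, z₂^{3^{k−1}} all lie in N_k, and their images in the quotient N_k / N_{k+1} generate that quotient (which is elementary abelian of order 27). -/
import Mathlib


open Matrix MatrixGroups

section Stmt8Aux

lemma three_ne_zero3 : (3 : ℤ_[3]) ≠ 0 := by
  have := PadicInt.prime_p (p := 3)
  rw [Nat.cast_ofNat] at this
  exact this.ne_zero

lemma prime_three3 : Prime (3 : ℤ_[3]) := by
  have := PadicInt.prime_p (p := 3)
  rwa [Nat.cast_ofNat] at this

lemma toZMod_eq_zero_iff3 {z : ℤ_[3]} : PadicInt.toZMod z = 0 ↔ (3 : ℤ_[3]) ∣ z := by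
  rw [← RingHom.mem_ker, PadicInt.ker_toZMod, PadicInt.maximalIdeal_eq_span_p,
    Ideal.mem_span_singleton, Nat.cast_ofNat]

open Classical in
noncomputable def quo3 (k : ℕ) (z : ℤ_[3]) : ℤ_[3] :=
  if h : (3 : ℤ_[3]) ^ k ∣ z then h.choose else 0

lemma quo3_eq {k : ℕ} {z q : ℤ_[3]} (h : (3:ℤ_[3]) ^ k * q = z) : quo3 k z = q := by
  have hd : (3:ℤ_[3]) ^ k ∣ z := ⟨q, h.symm⟩
  rw [quo3, dif_pos hd]
  refine mul_left_cancel₀ (pow_ne_zero k three_ne_zero3) (?_ : (3:ℤ_[3])^k * _ = _)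
  rw [← hd.choose_spec, h]

/-- `th3 k z = toZMod (z / 3^k)`. -/
noncomputable def th3 (k : ℕ) (z : ℤ_[3]) : ZMod 3 := PadicInt.toZMod (quo3 k z)

lemma th3_eq {k : ℕ} {z q : ℤ_[3]} (h : (3:ℤ_[3]) ^ k * q = z) :
    th3 k z = PadicInt.toZMod q := by rw [th3, quo3_eq h]

lemma th3_zero_iff {k : ℕ} {z q : ℤ_[3]} (h : (3:ℤ_[3]) ^ k * q = z) :
    th3 k z = 0 ↔ (3:ℤ_[3]) ^ (k+1) ∣ z := by
  constructor
  · intro h0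
    rw [th3_eq h] at h0
    obtain ⟨w, hw⟩ := toZMod_eq_zero_iff3.mp h0
    exact ⟨w, by rw [← h, hw, pow_succ]; ring⟩
  · rintro ⟨w, hw⟩
    have hq : q = 3 * w := by
      refine mul_left_cancel₀ (pow_ne_zero k three_ne_zero3) ?_
      rw [h, hw, pow_succ]; ring
    rw [th3_eq h, hq, toZMod_eq_zero_iff3]
    exact Dvd.intro w rfl

/-- cube of `1 + 3^(m+1) t` -/
lemma cube_one_add3 {m : ℕ} {t : ℤ_[3]} :
    (1 + 3^(m+1) * t)^3 = 1 + 3^(m+2) * (t + 3*(3^m*t^2 + 3^(2*m)*t^3)) := by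
  have h1 : (3:ℤ_[3])^(m+1) = 3^m * 3 := pow_succ 3 m
  have h2 : (3:ℤ_[3])^(m+2) = 3^m * 9 := by rw [pow_succ, pow_succ]; ring
  have h3 : (3:ℤ_[3])^(2*m) = (3^m)^2 := by rw [mul_comm, pow_mul]
  rw [h1, h2, h3]; ring

lemma pow_three_pow3 {u t : ℤ_[3]} (hu : u = 1 + 3 * t) (m : ℕ) :
    ∃ s : ℤ_[3], u ^ 3 ^ m = 1 + 3^(m+1) * s ∧ PadicInt.toZMod s = PadicInt.toZMod t := by
  induction m with
  | zero => exact ⟨t, by simpa using hu, rfl⟩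
  | succ m ih =>
    obtain ⟨s, hs, hst⟩ := ih
    refine ⟨s + 3*(3^m*s^2 + 3^(2*m)*s^3), ?_, ?_⟩
    · rw [pow_succ, pow_mul, hs, cube_one_add3]
    · rw [map_add, _root_.map_mul, hst]
      have : PadicInt.toZMod (3:ℤ_[3]) = 0 := toZMod_eq_zero_iff3.mpr dvd_rfl
      rw [this, zero_mul, add_zero]

lemma diag_pow3 (a b : ℤ_[3]) (n : ℕ) : (!![a, 0; 0, b]) ^ n = !![a^n, 0; 0, b^n] := by
  induction n with
  | zero => simp [Matrix.one_fin_two]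
  | succ n ih => rw [pow_succ, pow_succ, pow_succ, ih, Matrix.mul_fin_two]; ring_nf

/-- The coordinate map `N_K → (ZMod 3)³`. -/
noncomputable def F3 (K : ℕ) (A : SL(2, ℤ_[3])) : ZMod 3 × ZMod 3 × ZMod 3 :=
  (th3 K ((A : Matrix (Fin 2) (Fin 2) ℤ_[3]) 0 0 - 1),
   th3 K ((A : Matrix (Fin 2) (Fin 2) ℤ_[3]) 0 1),
   th3 K ((A : Matrix (Fin 2) (Fin 2) ℤ_[3]) 1 0))

lemma entries_of_mem {K : ℕ} {A : SL(2,ℤ_[3])}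
    (h : ∀ i j, (3 : ℤ_[3]) ^ K ∣
      ((A : Matrix (Fin 2) (Fin 2) ℤ_[3]) i j - (1 : Matrix (Fin 2) (Fin 2) ℤ_[3]) i j)) :
    (3:ℤ_[3])^K ∣ (A : Matrix (Fin 2) (Fin 2) ℤ_[3]) 0 0 - 1 ∧
    (3:ℤ_[3])^K ∣ (A : Matrix (Fin 2) (Fin 2) ℤ_[3]) 0 1 ∧
    (3:ℤ_[3])^K ∣ (A : Matrix (Fin 2) (Fin 2) ℤ_[3]) 1 0 ∧
    (3:ℤ_[3])^K ∣ (A : Matrix (Fin 2) (Fin 2) ℤ_[3]) 1 1 - 1 := by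
  refine ⟨?_, ?_, ?_, ?_⟩
  · simpa [Matrix.one_apply] using h 0 0
  · simpa [Matrix.one_apply] using h 0 1
  · simpa [Matrix.one_apply] using h 1 0
  · simpa [Matrix.one_apply] using h 1 1

lemma F3_mul {K : ℕ} (hK : K ≠ 0) {A B : SL(2,ℤ_[3])}
    (hA : ∀ i j, (3 : ℤ_[3]) ^ K ∣
      ((A : Matrix (Fin 2) (Fin 2) ℤ_[3]) i j - (1 : Matrix (Fin 2) (Fin 2) ℤ_[3]) i j))
    (hB : ∀ i j, (3 : ℤ_[3]) ^ K ∣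
      ((B : Matrix (Fin 2) (Fin 2) ℤ_[3]) i j - (1 : Matrix (Fin 2) (Fin 2) ℤ_[3]) i j)) :
    F3 K (A * B) = F3 K A + F3 K B := by
  obtain ⟨⟨a00, ha00⟩, ⟨a01, ha01⟩, ⟨a10, ha10⟩, ⟨a11, ha11⟩⟩ := entries_of_mem hA
  obtain ⟨⟨b00, hb00⟩, ⟨b01, hb01⟩, ⟨b10, hb10⟩, ⟨b11, hb11⟩⟩ := entries_of_mem hB
  set M : Matrix (Fin 2) (Fin 2) ℤ_[3] := (A : Matrix (Fin 2) (Fin 2) ℤ_[3])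
  set Mb : Matrix (Fin 2) (Fin 2) ℤ_[3] := (B : Matrix (Fin 2) (Fin 2) ℤ_[3])
  have hAB : ∀ i j, ((A * B : SL(2,ℤ_[3])) : Matrix (Fin 2) (Fin 2) ℤ_[3]) i j
      = M i 0 * Mb 0 j + M i 1 * Mb 1 j := by
    intro i j
    rw [Matrix.SpecialLinearGroup.coe_mul, Matrix.mul_apply, Fin.sum_univ_two]
  have h3K : PadicInt.toZMod ((3:ℤ_[3])^K) = 0 := by
    rw [toZMod_eq_zero_iff3]
    exact dvd_pow_self 3 hK
  have key : ∀ (z qa qb w : ℤ_[3]), (3:ℤ_[3])^K * (qa + qb + 3^K * w) = z →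
      th3 K z = PadicInt.toZMod qa + PadicInt.toZMod qb := by
    intro z qa qb w hz
    rw [th3_eq hz, map_add, map_add, _root_.map_mul, h3K, zero_mul, add_zero]
  have m00 : M 0 0 = 1 + 3^K*a00 := by linear_combination ha00
  have m11 : M 1 1 = 1 + 3^K*a11 := by linear_combination ha11
  have mb00 : Mb 0 0 = 1 + 3^K*b00 := by linear_combination hb00
  have mb11 : Mb 1 1 = 1 + 3^K*b11 := by linear_combination hb11
  have mb01 := hb01
  have c1 : th3 K (((A * B : SL(2,ℤ_[3])) : Matrix (Fin 2) (Fin 2) ℤ_[3]) 0 0 - 1)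
      = PadicInt.toZMod a00 + PadicInt.toZMod b00 := by
    refine key _ a00 b00 (a00*b00 + a01*b10) ?_
    rw [hAB 0 0, m00, mb00, ha01, hb10]; ring
  have c2 : th3 K (((A * B : SL(2,ℤ_[3])) : Matrix (Fin 2) (Fin 2) ℤ_[3]) 0 1)
      = PadicInt.toZMod b01 + PadicInt.toZMod a01 := by
    refine key _ b01 a01 (a00*b01 + a01*b11) ?_
    rw [hAB 0 1, m00, mb01, ha01, mb11]; ring
  have c3 : th3 K (((A * B : SL(2,ℤ_[3])) : Matrix (Fin 2) (Fin 2) ℤ_[3]) 1 0)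
      = PadicInt.toZMod b10 + PadicInt.toZMod a10 := by
    refine key _ b10 a10 (a11*b10 + a10*b00) ?_
    rw [hAB 1 0, m11, hb10, ha10, mb00]; ring
  have e1 : th3 K (M 0 0 - 1) = PadicInt.toZMod a00 := th3_eq ha00.symm
  have e2 : th3 K (M 0 1) = PadicInt.toZMod a01 := th3_eq ha01.symm
  have e3 : th3 K (M 1 0) = PadicInt.toZMod a10 := th3_eq ha10.symm
  have f1 : th3 K (Mb 0 0 - 1) = PadicInt.toZMod b00 := th3_eq hb00.symm
  have f2 : th3 K (Mb 0 1) = PadicInt.toZMod b01 := th3_eq hb01.symm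
  have f3 : th3 K (Mb 1 0) = PadicInt.toZMod b10 := th3_eq hb10.symm
  show (_, _, _) = (_, _, _) + (_, _, _)
  rw [Prod.mk_add_mk, Prod.mk_add_mk, Prod.mk.injEq, Prod.mk.injEq]
  exact ⟨by rw [c1, e1, f1], by rw [c2, e2, f2]; ring, by rw [c3, e3, f3]; ring⟩

lemma th3_zero (K : ℕ) : th3 K 0 = 0 := by
  rw [th3_eq (mul_zero ((3:ℤ_[3])^K)), map_zero]

lemma F3_one (K : ℕ) : F3 K 1 = 0 := by
  have h1 : ((1 : SL(2,ℤ_[3])) : Matrix (Fin 2) (Fin 2) ℤ_[3]) = 1 :=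
    Matrix.SpecialLinearGroup.coe_one
  simp [F3, h1, Matrix.one_fin_two, th3_zero, Prod.ext_iff]

lemma F3_zero_iff {K : ℕ} {A : SL(2,ℤ_[3])}
    (hA : ∀ i j, (3 : ℤ_[3]) ^ K ∣
      ((A : Matrix (Fin 2) (Fin 2) ℤ_[3]) i j - (1 : Matrix (Fin 2) (Fin 2) ℤ_[3]) i j)) :
    F3 K A = 0 ↔ ∀ i j, (3 : ℤ_[3]) ^ (K+1) ∣
      ((A : Matrix (Fin 2) (Fin 2) ℤ_[3]) i j - (1 : Matrix (Fin 2) (Fin 2) ℤ_[3]) i j) := by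
  obtain ⟨⟨a00, ha00⟩, ⟨a01, ha01⟩, ⟨a10, ha10⟩, ⟨a11, ha11⟩⟩ := entries_of_mem hA
  set M : Matrix (Fin 2) (Fin 2) ℤ_[3] := (A : Matrix (Fin 2) (Fin 2) ℤ_[3])
  have hF : F3 K A = (th3 K (M 0 0 - 1), th3 K (M 0 1), th3 K (M 1 0)) := rfl
  rw [hF, Prod.mk_eq_zero, Prod.mk_eq_zero, th3_zero_iff ha00.symm, th3_zero_iff ha01.symm,
    th3_zero_iff ha10.symm]
  constructor
  · rintro ⟨d00, d01, d10⟩ i j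
    have hdet : M 0 0 * M 1 1 - M 0 1 * M 1 0 = 1 := by
      have := A.prop
      rwa [Matrix.det_fin_two] at this
    have d11 : (3:ℤ_[3])^(K+1) ∣ M 1 1 - 1 := by
      have hid : M 1 1 - 1 = M 1 1 * (1 - M 0 0) + M 0 1 * M 1 0 := by
        linear_combination hdet
      rw [hid]
      refine dvd_add (Dvd.dvd.mul_left ?_ _) (Dvd.dvd.mul_right d01 _)
      rw [show (1 : ℤ_[3]) - M 0 0 = -(M 0 0 - 1) by ring]
      exact dvd_neg.mpr d00
    fin_cases i <;> fin_cases j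
    · simpa [Matrix.one_apply] using d00
    · simpa [Matrix.one_apply] using d01
    · simpa [Matrix.one_apply] using d10
    · simpa [Matrix.one_apply] using d11
  · intro h
    obtain ⟨⟨e00, e01, e10, _⟩⟩ := And.intro (entries_of_mem h) trivial
    exact ⟨e00, e01, e10⟩
lemma ofAdd_zsmul' {α : Type*} [SubNegMonoid α] (z : ℤ) (w : α) :
    Multiplicative.ofAdd (z • w) = (Multiplicative.ofAdd w) ^ z := by
  rw [← ofAdd_toAdd (Multiplicative.ofAdd w ^ z), toAdd_zpow, toAdd_ofAdd]

end Stmt8Aux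

set_option maxHeartbeats 1200000 in
/-- For every `k ≥ 1`, the elements `z₀^(3^(k-1))`, `z₁^(3^(k-1))`,
`z₂^(3^(k-1))` all lie in `N_k`, and their images in the quotient `N_k / N_{k+1}` generate
that quotient (equivalently, together with `N_{k+1}` they generate `N_k`); the quotient is
elementary abelian of order 27. -/
theorem stmt_8 (α h : ℤ_[3]) (hα2 : α ^ 2 = -2) (hα1 : (3 : ℤ_[3]) ∣ (α - 1)) (hh : 2 * h = 1)
    (x y : SL(2, ℤ_[3]))
    (hx : (x : Matrix (Fin 2) (Fin 2) ℤ_[3]) = !![0, -1; 1, -1])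
    (hy : (y : Matrix (Fin 2) (Fin 2) ℤ_[3]) = α • !![0, h; 1, -1])
    (z₀ z₁ z₂ : SL(2, ℤ_[3]))
    (hz₀ : z₀ = y * x⁻¹) (hz₁ : z₁ = x⁻¹ * y) (hz₂ : z₂ = x⁻¹ * x⁻¹ * y * x)
    (N : ℕ → Subgroup SL(2, ℤ_[3]))
    (hN : ∀ k, ∀ A : SL(2, ℤ_[3]), A ∈ N k ↔
      ∀ i j, (3 : ℤ_[3]) ^ k ∣
        ((A : Matrix (Fin 2) (Fin 2) ℤ_[3]) i j - (1 : Matrix (Fin 2) (Fin 2) ℤ_[3]) i j)) :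
    ∀ k : ℕ, 1 ≤ k →
      z₀ ^ 3 ^ (k - 1) ∈ N k ∧ z₁ ^ 3 ^ (k - 1) ∈ N k ∧ z₂ ^ 3 ^ (k - 1) ∈ N k ∧
      Subgroup.closure
        (insert (z₀ ^ 3 ^ (k - 1)) (insert (z₁ ^ 3 ^ (k - 1)) (insert (z₂ ^ 3 ^ (k - 1))
          (N (k + 1) : Set SL(2, ℤ_[3]))))) = N k ∧
      Nat.card (↥(N k) ⧸ (N (k + 1)).subgroupOf (N k)) = 27 := by
  intro k hk
  obtain ⟨m, rfl⟩ : ∃ m, k = m + 1 := ⟨k - 1, by omega⟩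
  simp only [Nat.add_sub_cancel]
  -- basic non-divisibility facts
  have h3nd1 : ¬ (3:ℤ_[3]) ∣ 1 := by
    intro hd
    have := toZMod_eq_zero_iff3.mpr hd
    rw [_root_.map_one] at this
    exact one_ne_zero this
  have h3nd2 : ¬ (3:ℤ_[3]) ∣ 2 := by
    intro hd
    have := toZMod_eq_zero_iff3.mpr hd
    rw [show ((2:ℤ_[3])) = (1+1 : ℤ_[3]) by norm_num, map_add, _root_.map_one] at this
    exact (by decide : ((1:ZMod 3) + 1 ≠ 0)) this
  have h2ne : (2:ℤ_[3]) ≠ 0 := fun h0 => h3nd2 (h0 ▸ dvd_zero 3)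
  -- the unit u = -(α h), with u * α = 1
  have huα : -(α * h) * α = 1 := by linear_combination (-h) * hα2 + hh
  -- u = 1 + 3 t with t not divisible by 3
  obtain ⟨s₀, hs₀⟩ := hα1
  have hαs : α + 2 = 3 * (s₀ + 1) := by linear_combination hs₀
  have hs2 : (s₀ + 1) * (α - 2) = -2 := by
    refine mul_left_cancel₀ three_ne_zero3 ?_
    linear_combination (2 - α) * hαs + hα2
  have hu : -(α * h) = 1 + 3 * (-((s₀+1) * h)) := by
    refine mul_left_cancel₀ h2ne ?_
    linear_combination (-2*h) * hαs + 2*hh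
  have hτ : PadicInt.toZMod (-((s₀+1) * h)) ≠ 0 := by
    rw [Ne, toZMod_eq_zero_iff3, dvd_neg]
    intro hd
    rcases prime_three3.dvd_mul.mp hd with hd | hd
    · exact h3nd2 (by
        have : (3:ℤ_[3]) ∣ -2 := hs2 ▸ hd.mul_right (α - 2)
        rwa [dvd_neg] at this)
    · exact h3nd1 (hh ▸ hd.mul_left 2)
  obtain ⟨t, hc', hτ1⟩ := pow_three_pow3 hu m
  set τ : ZMod 3 := PadicInt.toZMod (-((s₀+1) * h)) with hτdef
  clear_value τ
  -- names for the diagonal entries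
  set c : ℤ_[3] := (-(α * h)) ^ 3 ^ m with hcdef
  set d : ℤ_[3] := α ^ 3 ^ m with hddef
  have hc : c = 1 + 3^(m+1) * t := hc'
  have hcd : c * d = 1 := by rw [hcdef, hddef, ← mul_pow, huα, one_pow]
  have hc1 : c - 1 = 3^(m+1) * t := by linear_combination hc
  have hd1 : d - 1 = 3^(m+1) * (-(t * d)) := by linear_combination (-d) * hc + hcd
  have hcd1 : c - d = 3^(m+1) * (t * (1 + d)) := by linear_combination hc1 - hd1
  have hdc1 : d - c = 3^(m+1) * (-(t * (1 + d))) := by linear_combination -hcd1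
  have h3K0 : PadicInt.toZMod ((3:ℤ_[3])^(m+1)) = 0 :=
    toZMod_eq_zero_iff3.mpr (dvd_pow_self 3 (Nat.succ_ne_zero m))
  have hτd : PadicInt.toZMod d = 1 := by
    have : d = 1 + 3^(m+1) * (-(t * d)) := by linear_combination hd1
    rw [this, map_add, _root_.map_one, _root_.map_mul, h3K0, zero_mul, add_zero]
  have hτc : PadicInt.toZMod c = 1 := by
    rw [hc, map_add, _root_.map_one, _root_.map_mul, h3K0, zero_mul, add_zero]
  -- matrix computations
  have hxi : ((x⁻¹ : SL(2,ℤ_[3])) : Matrix (Fin 2) (Fin 2) ℤ_[3]) = !![-1, 1; -1, 0] := by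
    rw [Matrix.SpecialLinearGroup.coe_inv, hx, Matrix.adjugate_fin_two]
    norm_num
  have hz0m : ((z₀ : SL(2,ℤ_[3])) : Matrix (Fin 2) (Fin 2) ℤ_[3]) = !![-(α*h), 0; 0, α] := by
    rw [hz₀, Matrix.SpecialLinearGroup.coe_mul, hxi, hy, Matrix.smul_mul, Matrix.mul_fin_two]
    ext i j
    fin_cases i <;> fin_cases j <;> simp <;> ring
  have hz0n : ((z₀ ^ 3^m : SL(2,ℤ_[3])) : Matrix (Fin 2) (Fin 2) ℤ_[3]) = !![c, 0; 0, d] := by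
    rw [Matrix.SpecialLinearGroup.coe_pow, hz0m, diag_pow3, hcdef, hddef]
  have conjpow : ∀ (w : SL(2,ℤ_[3])) (n : ℕ), (x⁻¹ * w * x) ^ n = x⁻¹ * w^n * x := by
    intro w n
    have := conj_pow (i := n) (a := x⁻¹) (b := w)
    simpa using this
  have hz1conj : z₁ = x⁻¹ * z₀ * x := by rw [hz₁, hz₀]; group
  have hz2conj : z₂ = x⁻¹ * z₁ * x := by rw [hz₂, hz₁]; group
  have hz1n : ((z₁ ^ 3^m : SL(2,ℤ_[3])) : Matrix (Fin 2) (Fin 2) ℤ_[3]) = !![d, c - d; 0, c] := by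
    rw [hz1conj, conjpow, Matrix.SpecialLinearGroup.coe_mul, Matrix.SpecialLinearGroup.coe_mul,
      hxi, hz0n, hx]
    ext i j
    fin_cases i <;> fin_cases j <;> simp [Matrix.mul_apply, Fin.sum_univ_two] <;> ring
  have hz2n : ((z₂ ^ 3^m : SL(2,ℤ_[3])) : Matrix (Fin 2) (Fin 2) ℤ_[3]) = !![d, 0; d - c, c] := by
    rw [hz2conj, conjpow, Matrix.SpecialLinearGroup.coe_mul, Matrix.SpecialLinearGroup.coe_mul,
      hxi, hz1n, hx]
    ext i j
    fin_cases i <;> fin_cases j <;> simp [Matrix.mul_apply, Fin.sum_univ_two] <;> ring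
  clear_value c d
  -- memberships
  have mem_of : ∀ (w : SL(2,ℤ_[3])) (a b cc dd : ℤ_[3]),
      ((w : SL(2,ℤ_[3])) : Matrix (Fin 2) (Fin 2) ℤ_[3]) = !![a, b; cc, dd] →
      (3:ℤ_[3])^(m+1) ∣ a - 1 → (3:ℤ_[3])^(m+1) ∣ b → (3:ℤ_[3])^(m+1) ∣ cc →
      (3:ℤ_[3])^(m+1) ∣ dd - 1 → w ∈ N (m+1) := by
    intro w a b cc dd hw d1 d2 d3 d4
    rw [hN]
    intro i j
    fin_cases i <;> fin_cases j
    · simpa [hw, Matrix.one_apply] using d1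
    · simpa [hw, Matrix.one_apply] using d2
    · simpa [hw, Matrix.one_apply] using d3
    · simpa [hw, Matrix.one_apply] using d4
  have mem₀ : z₀ ^ 3^m ∈ N (m+1) :=
    mem_of _ c 0 0 d hz0n ⟨t, hc1⟩ (dvd_zero _) (dvd_zero _) ⟨-(t*d), hd1⟩
  have mem₁ : z₁ ^ 3^m ∈ N (m+1) :=
    mem_of _ d (c-d) 0 c hz1n ⟨-(t*d), hd1⟩ ⟨t*(1+d), hcd1⟩ (dvd_zero _) ⟨t, hc1⟩
  have mem₂ : z₂ ^ 3^m ∈ N (m+1) :=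
    mem_of _ d 0 (d-c) c hz2n ⟨-(t*d), hd1⟩ (dvd_zero _) ⟨-(t*(1+d)), hdc1⟩ ⟨t, hc1⟩
  -- F3 values of the generators
  have entry : ∀ (w : SL(2,ℤ_[3])) (a b cc dd : ℤ_[3]),
      ((w : SL(2,ℤ_[3])) : Matrix (Fin 2) (Fin 2) ℤ_[3]) = !![a, b; cc, dd] →
      F3 (m+1) w = (th3 (m+1) (a - 1), th3 (m+1) b, th3 (m+1) cc) := by
    intro w a b cc dd hw
    simp [F3, hw]
  have hF0 : F3 (m+1) (z₀ ^ 3^m) = (τ, 0, 0) := by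
    rw [entry _ c 0 0 d hz0n, th3_eq hc1.symm, hτ1, th3_zero]
  have hF1 : F3 (m+1) (z₁ ^ 3^m) = (-τ, 2*τ, 0) := by
    rw [entry _ d (c-d) 0 c hz1n, th3_eq hd1.symm, th3_eq hcd1.symm, th3_zero,
      map_neg, _root_.map_mul, _root_.map_mul, map_add, _root_.map_one, hτ1, hτd]
    norm_num; ring
  have hF2 : F3 (m+1) (z₂ ^ 3^m) = (-τ, 0, -(2*τ)) := by
    rw [entry _ d 0 (d-c) c hz2n, th3_eq hd1.symm, th3_eq hdc1.symm, th3_zero,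
      map_neg, map_neg, _root_.map_mul, _root_.map_mul, map_add, _root_.map_one, hτ1, hτd]
    norm_num; ring
  -- the homomorphism
  let W := Multiplicative (ZMod 3 × ZMod 3 × ZMod 3)
  let f : ↥(N (m+1)) →* W := MonoidHom.mk'
    (fun A => Multiplicative.ofAdd (F3 (m+1) (A : SL(2,ℤ_[3]))))
    (by
      intro A B
      have : ((A * B : ↥(N (m+1))) : SL(2,ℤ_[3])) = (A : SL(2,ℤ_[3])) * (B : SL(2,ℤ_[3])) := rfl
      show Multiplicative.ofAdd (F3 (m+1) ((A * B : ↥(N (m+1))) : SL(2,ℤ_[3])))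
        = Multiplicative.ofAdd (F3 (m+1) (A : SL(2,ℤ_[3])))
          * Multiplicative.ofAdd (F3 (m+1) (B : SL(2,ℤ_[3])))
      rw [this, F3_mul (Nat.succ_ne_zero m) ((hN (m+1) _).mp A.2) ((hN (m+1) _).mp B.2),
        ofAdd_add])
  have hfval : ∀ A : ↥(N (m+1)), f A = Multiplicative.ofAdd (F3 (m+1) (A : SL(2,ℤ_[3]))) :=
    fun A => rfl
  have hker : f.ker = (N (m+1+1)).subgroupOf (N (m+1)) := by
    ext A
    rw [MonoidHom.mem_ker, Subgroup.mem_subgroupOf, hfval, ofAdd_eq_one,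
      F3_zero_iff ((hN (m+1) _).mp A.2), hN (m+1+1)]
  -- solving the linear system
  have hsolve : ∀ v : ZMod 3 × ZMod 3 × ZMod 3, ∃ a b e : ℤ,
      a • F3 (m+1) (z₀ ^ 3^m) + b • F3 (m+1) (z₁ ^ 3^m) + e • F3 (m+1) (z₂ ^ 3^m) = v := by
    rintro ⟨v₁, v₂, v₃⟩
    have hv : ∀ w : ZMod 3, ((w.val : ℤ) : ZMod 3) = w := fun w => by
      rw [Int.cast_natCast, ZMod.natCast_val, ZMod.cast_id]
    set b' : ZMod 3 := τ⁻¹ * v₂ * 2⁻¹ with hb'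
    set e' : ZMod 3 := -(τ⁻¹ * v₃ * 2⁻¹) with he'
    set a' : ZMod 3 := τ⁻¹ * v₁ + b' + e' with ha'
    refine ⟨(a'.val : ℤ), (b'.val : ℤ), (e'.val : ℤ), ?_⟩
    rw [hF0, hF1, hF2]
    have iτ : τ * τ⁻¹ = 1 := mul_inv_cancel₀ hτ
    have i2 : (2 : ZMod 3) * 2⁻¹ = 1 := mul_inv_cancel₀ (by decide)
    simp only [Prod.smul_mk, Prod.mk_add_mk, Prod.mk.injEq, zsmul_eq_mul, hv]
    refine ⟨?_, ?_, ?_⟩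
    · rw [ha']
      linear_combination v₁ * iτ
    · rw [hb']
      linear_combination (v₂ * 2⁻¹ * 2) * iτ + v₂ * i2
    · rw [he']
      linear_combination (v₃ * 2⁻¹ * 2) * iτ + v₃ * i2
  -- generators as elements of N (m+1)
  let g₀ : ↥(N (m+1)) := ⟨z₀ ^ 3^m, mem₀⟩
  let g₁ : ↥(N (m+1)) := ⟨z₁ ^ 3^m, mem₁⟩
  let g₂ : ↥(N (m+1)) := ⟨z₂ ^ 3^m, mem₂⟩
  have hGG : ∀ a b e : ℤ, f (g₀ ^ a * g₁ ^ b * g₂ ^ e) =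
      Multiplicative.ofAdd (a • F3 (m+1) (z₀ ^ 3^m) + b • F3 (m+1) (z₁ ^ 3^m)
        + e • F3 (m+1) (z₂ ^ 3^m)) := by
    intro a b e
    rw [f.map_mul, f.map_mul, f.map_zpow, f.map_zpow, f.map_zpow, hfval g₀, hfval g₁, hfval g₂,
      ofAdd_add, ofAdd_add, ofAdd_zsmul', ofAdd_zsmul', ofAdd_zsmul']
  have hsurj : Function.Surjective f := by
    intro w
    obtain ⟨a, b, e, hv⟩ := hsolve (Multiplicative.toAdd w)
    exact ⟨g₀ ^ a * g₁ ^ b * g₂ ^ e, by rw [hGG, hv, ofAdd_toAdd]⟩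
  -- closure
  have hsub : N (m+1+1) ≤ N (m+1) := by
    intro g hg
    rw [hN] at hg ⊢
    intro i j
    exact (pow_dvd_pow (3:ℤ_[3]) (Nat.le_succ (m+1))).trans (hg i j)
  have hclosure : Subgroup.closure
      (insert (z₀ ^ 3 ^ m) (insert (z₁ ^ 3 ^ m) (insert (z₂ ^ 3 ^ m)
        (N (m+1+1) : Set SL(2, ℤ_[3]))))) = N (m+1) := by
    apply le_antisymm
    · rw [Subgroup.closure_le]
      rintro g hg
      rcases hg with rfl | rfl | rfl | hg
      · exact mem₀
      · exact mem₁
      · exact mem₂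
      · exact hsub hg
    · intro A hA
      obtain ⟨a, b, e, hv⟩ := hsolve (F3 (m+1) A)
      set gg : ↥(N (m+1)) := g₀ ^ a * g₁ ^ b * g₂ ^ e with hgg
      have hfgg : f gg = Multiplicative.ofAdd (F3 (m+1) A) := by rw [hgg, hGG, hv]
      have hkm : (⟨A, hA⟩ : ↥(N (m+1))) * gg⁻¹ ∈ f.ker := by
        rw [MonoidHom.mem_ker, f.map_mul, f.map_inv, hfgg, hfval]
        exact mul_inv_cancel _
      rw [hker, Subgroup.mem_subgroupOf] at hkm
      have hc1m : ((⟨A, hA⟩ * gg⁻¹ : ↥(N (m+1))) : SL(2,ℤ_[3])) ∈ Subgroup.closure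
          (insert (z₀ ^ 3 ^ m) (insert (z₁ ^ 3 ^ m) (insert (z₂ ^ 3 ^ m)
            (N (m+1+1) : Set SL(2, ℤ_[3]))))) :=
        Subgroup.subset_closure
          (Set.mem_insert_of_mem _ (Set.mem_insert_of_mem _ (Set.mem_insert_of_mem _ hkm)))
      have hgmem : ((gg : ↥(N (m+1))) : SL(2,ℤ_[3])) ∈ Subgroup.closure
          (insert (z₀ ^ 3 ^ m) (insert (z₁ ^ 3 ^ m) (insert (z₂ ^ 3 ^ m)
            (N (m+1+1) : Set SL(2, ℤ_[3]))))) := by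
        have hcoe : ((gg : ↥(N (m+1))) : SL(2,ℤ_[3]))
            = (z₀ ^ 3^m) ^ a * (z₁ ^ 3^m) ^ b * (z₂ ^ 3^m) ^ e := by
          rw [hgg]
          push_cast
          rfl
        rw [hcoe]
        refine mul_mem (mul_mem ?_ ?_) ?_
        · exact Subgroup.zpow_mem _ (Subgroup.subset_closure (Set.mem_insert _ _)) a
        · exact Subgroup.zpow_mem _ (Subgroup.subset_closure
            (Set.mem_insert_of_mem _ (Set.mem_insert _ _))) b
        · exact Subgroup.zpow_mem _ (Subgroup.subset_closure
            (Set.mem_insert_of_mem _ (Set.mem_insert_of_mem _ (Set.mem_insert _ _)))) e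
      have : A = ((⟨A, hA⟩ * gg⁻¹ : ↥(N (m+1))) : SL(2,ℤ_[3])) * (gg : SL(2,ℤ_[3])) := by
        push_cast
        group
      rw [this]
      exact mul_mem hc1m hgmem
  -- cardinality
  have hcard : Nat.card (↥(N (m+1)) ⧸ (N (m+1+1)).subgroupOf (N (m+1))) = 27 := by
    rw [← hker]
    have equiv := QuotientGroup.quotientKerEquivOfSurjective f hsurj
    rw [Nat.card_congr equiv.toEquiv]
    simp [W, Nat.card_eq_fintype_card]
  exact ⟨mem₀, mem₁, mem₂, hclosure, hcard⟩
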